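/- arXiv:1211.1890 — 9 statements merged into one kernel-verified Lean document; each statement's English description precedes it below -/
import Mathlib

section
/- Let G be a multiplicatively written abelian group, let φ : G → [0,∞) be a height on G, and let t ∈ (0,∞). Then the t-metric version φ_t of φ is a t-metric height on G, and φ_t(α) ≤ φ(α) for all α ∈ G. -/
open scoped BigOperators

/-- A (logarithmic) height on a multiplicatively written abelian group `G`:
a nonnegative real-valued function with `φ 1 = 0` and `φ α⁻¹ = φ α`. -/
def IsHeight {G : Type*} [CommGroup G] (φ : G → ℝ) : Prop :=
  (∀ α : G, 0 ≤ φ α) ∧ φ 1 = 0 ∧ ∀ α : G, φ α⁻¹ = φ α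

/-- A `t`-metric height for real `t ∈ (0,∞)`: a height satisfying the `t`-triangle
inequality `φ (αβ) ≤ (φ α ^ t + φ β ^ t) ^ (1/t)`. -/
def IsTMetricHeight {G : Type*} [CommGroup G] (φ : G → ℝ) (t : ℝ) : Prop :=
  IsHeight φ ∧ ∀ α β : G, φ (α * β) ≤ (φ α ^ t + φ β ^ t) ^ (1 / t)

/-- An `∞`-metric height: a height satisfying the strong triangle inequality
`φ (αβ) ≤ max (φ α) (φ β)`. -/
def IsInftyMetricHeight {G : Type*} [CommGroup G] (φ : G → ℝ) : Prop :=
  IsHeight φ ∧ ∀ α β : G, φ (α * β) ≤ max (φ α) (φ β)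

/-- The `t`-metric version of a height `φ`:
`φ_t(α) = inf{(∑ₙ φ(αₙ)^t)^(1/t) : α = ∏ₙ αₙ}`, the infimum over all ways of writing `α`
as a finite product of elements of `G`. -/
noncomputable def metricVersion {G : Type*} [CommGroup G] (φ : G → ℝ) (t : ℝ) (α : G) : ℝ :=
  sInf {x : ℝ | ∃ (N : ℕ) (f : Fin (N + 1) → G),
    α = ∏ i, f i ∧ x = (∑ i, φ (f i) ^ t) ^ (1 / t)}

/-- The `∞`-metric version of a height `φ`:
`φ_∞(α) = inf{max₁≤n≤N φ(αₙ) : α = ∏ₙ αₙ}`. -/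
noncomputable def inftyMetricVersion {G : Type*} [CommGroup G] (φ : G → ℝ) (α : G) : ℝ :=
  sInf {x : ℝ | ∃ (N : ℕ) (f : Fin (N + 1) → G),
    α = ∏ i, f i ∧ x = Finset.univ.sup' Finset.univ_nonempty (fun i => φ (f i))}

/-! Put `ψ(α) = inf ∑ φ(αₙ)^t` over decompositions `α = ∏ αₙ`, so that `φ_t = ψ^(1/t)` because
`x ↦ x^(1/t)` is monotone and continuous on `[0, ∞)`. Concatenating decompositions makes `ψ`
subadditive, which is exactly the `t`-triangle inequality for `φ_t`; inverting every factor
gives `ψ(α⁻¹) = ψ(α)`, and the one-factor decomposition gives `ψ ≤ φ^t`. -/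

lemma Real.sInf_rpow {s : Set ℝ} (hne : s.Nonempty) (hs : ∀ x ∈ s, 0 ≤ x) {p : ℝ}
    (hp : 0 ≤ p) : sInf s ^ p = sInf ((· ^ p) '' s) :=
  MonotoneOn.map_csInf_of_continuousWithinAt (Real.continuous_rpow_const hp).continuousWithinAt
    (fun _ hx _ _ hxy => Real.rpow_le_rpow (hs _ hx) hxy hp) hne ⟨0, hs⟩

namespace MetricVersion

open Set
open scoped Pointwise

variable {G : Type*} [CommGroup G] (φ : G → ℝ) (t : ℝ)

def powerSums (α : G) : Set ℝ :=
  {s | ∃ (N : ℕ) (f : Fin (N + 1) → G), α = ∏ i, f i ∧ s = ∑ i, φ (f i) ^ t}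

variable {φ t}

lemma rpow_mem_powerSums (α : G) : φ α ^ t ∈ powerSums φ t α :=
  ⟨0, fun _ => α, by simp, by simp⟩

lemma powerSums_nonempty (α : G) : (powerSums φ t α).Nonempty :=
  ⟨_, rpow_mem_powerSums α⟩

lemma nonneg_of_mem_powerSums (hφ : ∀ α, 0 ≤ φ α) {α : G} {s : ℝ} (hs : s ∈ powerSums φ t α) :
    0 ≤ s := by
  obtain ⟨N, f, -, rfl⟩ := hs
  exact Finset.sum_nonneg fun i _ => Real.rpow_nonneg (hφ _) t

lemma powerSums_bddBelow (hφ : ∀ α, 0 ≤ φ α) (α : G) : BddBelow (powerSums φ t α) :=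
  ⟨0, fun _ => nonneg_of_mem_powerSums hφ⟩

lemma sInf_powerSums_nonneg (hφ : ∀ α, 0 ≤ φ α) (α : G) : 0 ≤ sInf (powerSums φ t α) :=
  le_csInf (powerSums_nonempty α) fun _ => nonneg_of_mem_powerSums hφ

lemma powerSums_add_subset (α β : G) :
    powerSums φ t α + powerSums φ t β ⊆ powerSums φ t (α * β) := by
  rintro _ ⟨_, ⟨N, f, rfl, rfl⟩, _, ⟨M, g, rfl, rfl⟩, rfl⟩
  have hNM : N + M + 1 + 1 = (N + 1) + (M + 1) := by omega
  refine ⟨N + M + 1, fun i => Fin.append f g (Fin.cast hNM i), ?_, ?_⟩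
  · rw [Fin.prod_congr' (Fin.append f g), Fin.prod_univ_add (Fin.append f g)]
    simp only [Fin.append_left, Fin.append_right]
  · rw [Fin.sum_congr' (fun i => φ (Fin.append f g i) ^ t),
      Fin.sum_univ_add (fun i => φ (Fin.append f g i) ^ t)]
    simp only [Fin.append_left, Fin.append_right]

lemma powerSums_inv (hφ : ∀ α, φ α⁻¹ = φ α) (α : G) : powerSums φ t α⁻¹ = powerSums φ t α := by
  have key : ∀ γ : G, powerSums φ t γ ⊆ powerSums φ t γ⁻¹ := by
    rintro γ _ ⟨N, f, rfl, rfl⟩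
    exact ⟨N, fun i => (f i)⁻¹, Finset.prod_inv_distrib _ |>.symm, by simp only [hφ]⟩
  exact Subset.antisymm (by simpa only [inv_inv] using key α⁻¹) (key α)

lemma sInf_powerSums_le (hφ : ∀ α, 0 ≤ φ α) (α : G) : sInf (powerSums φ t α) ≤ φ α ^ t :=
  csInf_le (powerSums_bddBelow hφ α) (rpow_mem_powerSums α)

lemma sInf_powerSums_mul_le (hφ : ∀ α, 0 ≤ φ α) (α β : G) :
    sInf (powerSums φ t (α * β)) ≤ sInf (powerSums φ t α) + sInf (powerSums φ t β) := by
  rw [← csInf_add (powerSums_nonempty α) (powerSums_bddBelow hφ α) (powerSums_nonempty β)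
    (powerSums_bddBelow hφ β)]
  exact csInf_le_csInf (powerSums_bddBelow hφ _)
    ((powerSums_nonempty α).add (powerSums_nonempty β)) (powerSums_add_subset α β)

lemma sInf_powerSums_one (hφ : ∀ α, 0 ≤ φ α) (hφ₁ : φ 1 = 0) (ht : t ≠ 0) :
    sInf (powerSums φ t (1 : G)) = 0 :=
  le_antisymm ((sInf_powerSums_le hφ 1).trans_eq (by rw [hφ₁, Real.zero_rpow ht]))
    (sInf_powerSums_nonneg hφ 1)

lemma metricVersion_eq_sInf_powerSums_rpow (hφ : ∀ α, 0 ≤ φ α) (ht : 0 ≤ t) (α : G) :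
    metricVersion φ t α = sInf (powerSums φ t α) ^ (1 / t) := by
  rw [Real.sInf_rpow (powerSums_nonempty α) (fun _ => nonneg_of_mem_powerSums hφ)
    (one_div_nonneg.2 ht), metricVersion]
  congr 1
  ext x
  simp [powerSums, eq_comm]

lemma metricVersion_rpow (hφ : ∀ α, 0 ≤ φ α) (ht : 0 < t) (α : G) :
    metricVersion φ t α ^ t = sInf (powerSums φ t α) := by
  rw [metricVersion_eq_sInf_powerSums_rpow hφ ht.le α, one_div,
    Real.rpow_inv_rpow (sInf_powerSums_nonneg hφ α) ht.ne']

end MetricVersion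

open MetricVersion in
/-- If `φ` is a height on `G` and `t ∈ (0,∞)`, then the `t`-metric version `φ_t` of `φ`
is a `t`-metric height on `G`, and `φ_t(α) ≤ φ(α)` for all `α ∈ G`. -/
theorem metricVersion_isTMetricHeight_le {G : Type*} [CommGroup G] (φ : G → ℝ)
    (hφ : IsHeight φ) (t : ℝ) (ht : 0 < t) :
    IsTMetricHeight (metricVersion φ t) t ∧ ∀ α : G, metricVersion φ t α ≤ φ α := by
  obtain ⟨hφ₀, hφ₁, hφinv⟩ := hφ
  have hφt := metricVersion_eq_sInf_powerSums_rpow hφ₀ ht.le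
  refine ⟨⟨⟨fun α => ?_, ?_, fun α => ?_⟩, fun α β => ?_⟩, fun α => ?_⟩
  · rw [hφt]
    exact Real.rpow_nonneg (sInf_powerSums_nonneg hφ₀ α) _
  · rw [hφt, sInf_powerSums_one hφ₀ hφ₁ ht.ne', Real.zero_rpow (one_div_ne_zero ht.ne')]
  · rw [hφt, hφt, powerSums_inv hφinv]
  · rw [hφt, metricVersion_rpow hφ₀ ht, metricVersion_rpow hφ₀ ht]
    gcongr
    · exact sInf_powerSums_nonneg hφ₀ _
    · exact sInf_powerSums_mul_le hφ₀ α β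
  · calc metricVersion φ t α ≤ (φ α ^ t) ^ (1 / t) := by
          rw [hφt]
          gcongr
          · exact sInf_powerSums_nonneg hφ₀ α
          · exact sInf_powerSums_le hφ₀ α
      _ = φ α := by rw [one_div, Real.rpow_rpow_inv (hφ₀ α) ht.ne']
end

section
/- Let G be a multiplicatively written abelian group, let φ : G → [0,∞) be a height on G, and let t ∈ (0,∞). If ψ : G → [0,∞) is any t-metric height on G with ψ(α) ≤ φ(α) for all α ∈ G, then ψ(α) ≤ φ_t(α) for all α ∈ G. In other words, φ_t is the largest t-metric height bounded above by φ. -/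
open scoped BigOperators

/-!
Raising the `t`-triangle inequality to the power `t` makes `ψ ^ t` subadditive, so by induction
`ψ (∏ αₙ) ^ t ≤ ∑ ψ αₙ ^ t` for every finite product. Hence `ψ α ≤ (∑ φ αₙ ^ t) ^ (1/t)` for every
factorization `α = ∏ αₙ`, and `ψ α` is a lower bound of the set whose infimum is `φ_t α`.
-/

namespace IsTMetricHeight

variable {G : Type*} [CommGroup G] {ψ : G → ℝ} {t : ℝ}

theorem nonneg (hψ : IsTMetricHeight ψ t) (α : G) : 0 ≤ ψ α :=
  hψ.1.1 α

theorem rpow_mul_le (hψ : IsTMetricHeight ψ t) (ht : 0 < t) (α β : G) :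
    ψ (α * β) ^ t ≤ ψ α ^ t + ψ β ^ t := by
  have hsum : 0 ≤ ψ α ^ t + ψ β ^ t := by
    have := hψ.nonneg α; have := hψ.nonneg β; positivity
  rw [← Real.le_rpow_inv_iff_of_pos (hψ.nonneg _) hsum ht, ← one_div]
  exact hψ.2 α β

theorem rpow_prod_le (hψ : IsTMetricHeight ψ t) (ht : 0 < t) {ι : Type*} (s : Finset ι)
    (f : ι → G) : ψ (∏ i ∈ s, f i) ^ t ≤ ∑ i ∈ s, ψ (f i) ^ t := by
  classical
  induction s using Finset.induction_on with
  | empty => simp [hψ.1.2.1, Real.zero_rpow ht.ne']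
  | insert a s ha ih =>
    rw [Finset.prod_insert ha, Finset.sum_insert ha]
    linarith [hψ.rpow_mul_le ht (f a) (∏ i ∈ s, f i)]

theorem le_rpow_sum (hψ : IsTMetricHeight ψ t) (ht : 0 < t) {ι : Type*} (s : Finset ι)
    (f : ι → G) : ψ (∏ i ∈ s, f i) ≤ (∑ i ∈ s, ψ (f i) ^ t) ^ (1 / t) := by
  have hsum : 0 ≤ ∑ i ∈ s, ψ (f i) ^ t :=
    Finset.sum_nonneg fun i _ => Real.rpow_nonneg (hψ.nonneg _) t
  rw [one_div, Real.le_rpow_inv_iff_of_pos (hψ.nonneg _) hsum ht]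
  exact hψ.rpow_prod_le ht s f

end IsTMetricHeight

theorem le_metricVersion {G : Type*} [CommGroup G] {φ : G → ℝ} {t c : ℝ} {α : G}
    (h : ∀ (N : ℕ) (f : Fin (N + 1) → G), α = ∏ i, f i → c ≤ (∑ i, φ (f i) ^ t) ^ (1 / t)) :
    c ≤ metricVersion φ t α := by
  refine le_csInf ⟨_, 0, fun _ => α, by simp, rfl⟩ ?_
  rintro x ⟨N, f, hα, rfl⟩
  exact h N f hα

theorem le_metricVersion_of_tMetric_le_general {G : Type*} [CommGroup G] (φ ψ : G → ℝ)
    (t : ℝ) (ht : 0 < t) (hψ : IsTMetricHeight ψ t)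
    (hle : ∀ α : G, ψ α ≤ φ α) :
    ∀ α : G, ψ α ≤ metricVersion φ t α := by
  intro α
  refine le_metricVersion fun N f hα => ?_
  subst hα
  have hpow_le : ∑ i, ψ (f i) ^ t ≤ ∑ i, φ (f i) ^ t :=
    Finset.sum_le_sum fun i _ => Real.rpow_le_rpow (hψ.nonneg _) (hle _) ht.le
  calc ψ (∏ i, f i) ≤ (∑ i, ψ (f i) ^ t) ^ (1 / t) := hψ.le_rpow_sum ht _ f
    _ ≤ (∑ i, φ (f i) ^ t) ^ (1 / t) :=
      Real.rpow_le_rpow (Finset.sum_nonneg fun i _ => Real.rpow_nonneg (hψ.nonneg _) t)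
        hpow_le (one_div_nonneg.mpr ht.le)

/-- If `φ` is a height on `G`, `t ∈ (0,∞)`, and `ψ` is any `t`-metric height on `G` with
`ψ ≤ φ`, then `ψ ≤ φ_t`.  In other words, `φ_t` is the largest `t`-metric height bounded
above by `φ`. -/
theorem le_metricVersion_of_tMetric_le {G : Type*} [CommGroup G] (φ ψ : G → ℝ)
    (hφ : IsHeight φ) (t : ℝ) (ht : 0 < t) (hψ : IsTMetricHeight ψ t)
    (hle : ∀ α : G, ψ α ≤ φ α) :
    ∀ α : G, ψ α ≤ metricVersion φ t α :=
  le_metricVersion_of_tMetric_le_general φ ψ t ht hψ hle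
end

section
/- Let G be a multiplicatively written abelian group and let φ : G → [0,∞) be a height on G. Define φ_∞(α) = inf{max_{1≤n≤N} φ(α_n) : N ∈ ℕ, α_n ∈ G, α = ∏_{n=1}^N α_n}. Then φ_∞ is an ∞-metric height on G (that is, φ_∞(αβ) ≤ max{φ_∞(α), φ_∞(β)} for all α, β ∈ G) and φ_∞(α) ≤ φ(α) for all α ∈ G. -/
open scoped BigOperators

/-!
The value `φ_∞ α` is an infimum over factorizations of `α`. Concatenating factorizations of
`α` and `β` gives one of `α * β` whose largest factor height is the larger of the two maxima,
which yields the strong triangle inequality; inverting every factor shows `φ_∞ α⁻¹ = φ_∞ α`; and the trivial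
factorization `α = α` gives `φ_∞ α ≤ φ α`, hence also `φ_∞ 1 = 0`.
-/

open Finset

section
variable {G : Type*} [CommGroup G] {φ : G → ℝ}

theorem inftyMetricVersion_le_of_eq_prod (hφ : ∀ α, 0 ≤ φ α) {α : G} {ι : Type*} [Fintype ι]
    [Nonempty ι] (f : ι → G) (hf : α = ∏ i, f i) :
    inftyMetricVersion φ α ≤ univ.sup' univ_nonempty fun i => φ (f i) := by
  obtain ⟨N, hN⟩ := Nat.exists_eq_add_one_of_ne_zero (Fintype.card_ne_zero (α := ι))
  let e : ι ≃ Fin (N + 1) := (Fintype.equivFin ι).trans (finCongr hN)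
  have hbdd : BddBelow {x : ℝ | ∃ (N : ℕ) (f : Fin (N + 1) → G),
      α = ∏ i, f i ∧ x = univ.sup' univ_nonempty fun i => φ (f i)} := by
    refine ⟨0, ?_⟩
    rintro x ⟨M, g, -, rfl⟩
    exact (hφ (g 0)).trans (le_sup' (fun i => φ (g i)) (mem_univ 0))
  calc inftyMetricVersion φ α ≤ univ.sup' univ_nonempty fun i => φ (f (e.symm i)) :=
        csInf_le hbdd ⟨N, _, hf.trans (e.symm.prod_comp f).symm, rfl⟩
    _ ≤ univ.sup' univ_nonempty fun i => φ (f i) :=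
        sup'_le _ _ fun i _ => le_sup' (fun j => φ (f j)) (mem_univ _)

theorem le_inftyMetricVersion {c : ℝ} {α : G}
    (h : ∀ (N : ℕ) (f : Fin (N + 1) → G), α = ∏ i, f i →
      c ≤ univ.sup' univ_nonempty fun i => φ (f i)) :
    c ≤ inftyMetricVersion φ α :=
  le_csInf ⟨φ α, 0, fun _ => α, by simp, by simp⟩ (by rintro x ⟨N, f, hf, rfl⟩; exact h N f hf)

theorem exists_eq_prod_sup'_lt_of_inftyMetricVersion_lt {c : ℝ} {α : G}
    (h : inftyMetricVersion φ α < c) :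
    ∃ (N : ℕ) (f : Fin (N + 1) → G), α = ∏ i, f i ∧
      (univ.sup' univ_nonempty fun i => φ (f i)) < c := by
  by_contra! hc
  exact h.not_ge (le_inftyMetricVersion hc)

theorem inftyMetricVersion_le_self (hφ : ∀ α, 0 ≤ φ α) (α : G) :
    inftyMetricVersion φ α ≤ φ α := by
  simpa using inftyMetricVersion_le_of_eq_prod hφ (fun _ : Unit => α) (by simp)

theorem inftyMetricVersion_nonneg (hφ : ∀ α, 0 ≤ φ α) (α : G) : 0 ≤ inftyMetricVersion φ α :=
  le_inftyMetricVersion fun _ f _ => (hφ (f 0)).trans (le_sup' (fun i => φ (f i)) (mem_univ 0))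

theorem inftyMetricVersion_inv_le (hφ : ∀ α, 0 ≤ φ α) (hinv : ∀ α, φ α⁻¹ = φ α) (α : G) :
    inftyMetricVersion φ α⁻¹ ≤ inftyMetricVersion φ α :=
  le_inftyMetricVersion fun N f hf => by
    simpa [hinv] using inftyMetricVersion_le_of_eq_prod hφ (fun i => (f i)⁻¹) (by simp [hf])

theorem inftyMetricVersion_inv (hφ : ∀ α, 0 ≤ φ α) (hinv : ∀ α, φ α⁻¹ = φ α) (α : G) :
    inftyMetricVersion φ α⁻¹ = inftyMetricVersion φ α :=
  (inftyMetricVersion_inv_le hφ hinv α).antisymm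
    (by simpa using inftyMetricVersion_inv_le hφ hinv α⁻¹)

theorem inftyMetricVersion_mul_le (hφ : ∀ α, 0 ≤ φ α) (α β : G) :
    inftyMetricVersion φ (α * β) ≤ max (inftyMetricVersion φ α) (inftyMetricVersion φ β) := by
  by_contra! hlt
  obtain ⟨N, f, hf, hfc⟩ :=
    exists_eq_prod_sup'_lt_of_inftyMetricVersion_lt ((le_max_left _ _).trans_lt hlt)
  obtain ⟨M, g, hg, hgc⟩ :=
    exists_eq_prod_sup'_lt_of_inftyMetricVersion_lt ((le_max_right _ _).trans_lt hlt)
  have hprod : α * β = ∏ i, Sum.elim f g i := by simp [Fintype.prod_sum_type, hf, hg]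
  have hsup : (univ.sup' univ_nonempty fun i => φ (Sum.elim f g i)) ≤
      max (univ.sup' univ_nonempty fun i => φ (f i)) (univ.sup' univ_nonempty fun i => φ (g i)) :=
    sup'_le _ _ fun
      | .inl i, _ => le_max_of_le_left (le_sup' (fun i => φ (f i)) (mem_univ i))
      | .inr i, _ => le_max_of_le_right (le_sup' (fun i => φ (g i)) (mem_univ i))
  exact ((inftyMetricVersion_le_of_eq_prod hφ _ hprod).trans hsup).not_gt (max_lt hfc hgc)

end

/-- If `φ` is a height on `G`, then `φ_∞` is an `∞`-metric height on `G`
(that is, `φ_∞(αβ) ≤ max{φ_∞(α), φ_∞(β)}` for all `α, β ∈ G`) and `φ_∞(α) ≤ φ(α)`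
for all `α ∈ G`. -/
theorem inftyMetricVersion_isInftyMetricHeight_le {G : Type*} [CommGroup G] (φ : G → ℝ)
    (hφ : IsHeight φ) :
    IsInftyMetricHeight (inftyMetricVersion φ) ∧ ∀ α : G, inftyMetricVersion φ α ≤ φ α := by
  obtain ⟨hφ0, hφ1, hinv⟩ := hφ
  have hone : inftyMetricVersion φ 1 = 0 :=
    ((inftyMetricVersion_le_self hφ0 1).trans_eq hφ1).antisymm (inftyMetricVersion_nonneg hφ0 1)
  exact ⟨⟨⟨inftyMetricVersion_nonneg hφ0, hone, inftyMetricVersion_inv hφ0 hinv⟩,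
    inftyMetricVersion_mul_le hφ0⟩, inftyMetricVersion_le_self hφ0⟩
end

section
/- Let G be a multiplicatively written abelian group, let φ : G → [0,∞) be a height on G, fix α ∈ G, and let t ∈ (0,∞). Then the following conditions are equivalent: (i) there exist N ∈ ℕ and α_1, …, α_N ∈ G with α = ∏_{n=1}^N α_n and φ_t(α) = (∑_{n=1}^N φ(α_n)^t)^(1/t) (the infimum in the definition of φ_t(α) is attained); (ii) there exists a finite set R ⊆ G containing the identity that replaces G at t; (iii) there exists a set S ⊆ G containing the identity, with φ(S) finite, that replaces G at t. -/
open scoped BigOperators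

/-- A set `S ⊆ G` containing the identity *replaces* `G` at `t` (for `φ` and `α`) if
`φ_t(α)` equals the infimum of `(∑ₙ φ(αₙ)^t)^(1/t)` over factorizations of `α` with all
factors in `S`; we express this by saying that `φ_t(α)` is the greatest lower bound of
the set of values arising from such factorizations. -/
def Replaces {G : Type*} [CommGroup G] (φ : G → ℝ) (t : ℝ) (α : G) (S : Set G) : Prop :=
  IsGLB {x : ℝ | ∃ (N : ℕ) (f : Fin (N + 1) → G),
      (∀ i, f i ∈ S) ∧ α = ∏ i, f i ∧ x = (∑ i, φ (f i) ^ t) ^ (1 / t)}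
    (metricVersion φ t α)

/-- The infimum in the definition of `φ_t(α)` is attained: some finite factorization
of `α` achieves the value `φ_t(α)`. -/
def InfAttained {G : Type*} [CommGroup G] (φ : G → ℝ) (t : ℝ) (α : G) : Prop :=
  ∃ (N : ℕ) (f : Fin (N + 1) → G),
    α = ∏ i, f i ∧ metricVersion φ t α = (∑ i, φ (f i) ^ t) ^ (1 / t)

/-- The `L_t` norm `‖x‖_t = (∑ₙ |xₙ|^t)^(1/t)` of a finitely supported real sequence,
realized as a `Finsupp`. -/
noncomputable def ltNorm (x : ℕ →₀ ℝ) (t : ℝ) : ℝ :=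
  (∑ n ∈ x.support, |x n| ^ t) ^ (1 / t)

/-- A subset `K ⊆ (0,∞)` is *uniform* (for `φ` and `α`) if there is a single finitely
supported real sequence `x` with `φ_t(α) = ‖x‖_t` for all `t ∈ K`. -/
def IsUniform {G : Type*} [CommGroup G] (φ : G → ℝ) (α : G) (K : Set ℝ) : Prop :=
  ∃ x : ℕ →₀ ℝ, ∀ t ∈ K, metricVersion φ t α = ltNorm x t

/-- A point `t` of an interval `I` is *standard* relative to `I` (for `φ` and `α`) if
there is a uniform open interval `J ⊆ I` containing `t`; otherwise `t` is *exceptional*. -/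
def IsStandardPt {G : Type*} [CommGroup G] (φ : G → ℝ) (α : G) (I : Set ℝ) (t : ℝ) : Prop :=
  ∃ J : Set ℝ, J ⊆ I ∧ IsOpen J ∧ J.OrdConnected ∧ t ∈ J ∧ IsUniform φ α J

/-- `s` is an *intersection point* of a set `𝒳` of finitely supported real sequences if
there are `x, y ∈ 𝒳` with `‖x‖_s = ‖y‖_s` whose norm functions `t ↦ ‖x‖_t`, `t ↦ ‖y‖_t`
are not identical on `(0,∞)`. -/
def IsIntersectionPt (𝒳 : Set (ℕ →₀ ℝ)) (s : ℝ) : Prop :=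
  ∃ x ∈ 𝒳, ∃ y ∈ 𝒳, ltNorm x s = ltNorm y s ∧ ∃ t : ℝ, 0 < t ∧ ltNorm x t ≠ ltNorm y t

/-!
If `φ(S)` is finite, the powers `φ(β)^t`, `β ∈ S`, take finitely many nonnegative values, so
below any bound only finitely many sums `∑ φ(αₙ)^t` of them are possible: each positive value
`w` can occur at most `C / w` times. A set of reals whose part below some point above its
infimum is finite contains its infimum, so the infimum over factorizations in `S` is attained,
and by `Replaces` it equals `φ_t(α)`. Conversely, an optimal factorization `α = ∏ αₙ` makes
`{1, α₁, …, α_N}` replace `G`.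
-/

open Set

theorem IsGLB.mem_of_finite_inter_Iic {α : Type*} [LinearOrder α] {s : Set α} {a b : α}
    (h : IsGLB s a) (hab : a < b) (hfin : (s ∩ Iic b).Finite) : a ∈ s := by
  obtain ⟨c, hcs, -, hcb⟩ := h.exists_between hab
  obtain ⟨c₀, ⟨hc₀s, hc₀b⟩, hc₀min⟩ :=
    exists_min_image _ id hfin ⟨c, hcs, hcb.le⟩
  have hc₀lower : c₀ ∈ lowerBounds s := fun x hx =>
    (le_or_gt x b).elim (fun hxb => hc₀min x ⟨hx, hxb⟩) fun hbx => hc₀b.trans hbx.le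
  rwa [le_antisymm (h.1 hc₀s) (h.2 hc₀lower)]

theorem finite_setOf_sum_natCast_mul_le {ι : Type*} [Fintype ι] {w : ι → ℝ}
    (hw : ∀ i, 0 ≤ w i) (C : ℝ) :
    {x : ℝ | ∃ n : ι → ℕ, ∑ i, n i * w i = x ∧ x ≤ C}.Finite := by
  classical
  set bound : ι → ℕ := fun i => ⌈C / w i⌉₊
  refine ((finite_Iic bound).image fun n => ∑ i, n i * w i).subset ?_
  rintro _ ⟨n, rfl, hC⟩
  -- truncating `n` at `bound` changes only coefficients of zero weights
  refine ⟨n ⊓ bound, mem_Iic.2 inf_le_right, Finset.sum_congr rfl fun i _ => ?_⟩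
  rcases (hw i).eq_or_lt with hi | hi
  · simp [← hi]
  have hni : n i * w i ≤ C :=
    (Finset.single_le_sum (fun j _ => mul_nonneg (Nat.cast_nonneg _) (hw j))
      (Finset.mem_univ i)).trans hC
  have hn : n i ≤ bound i := by
    exact_mod_cast ((le_div_iff₀ hi).2 hni).trans (Nat.le_ceil _)
  rw [Pi.inf_apply, min_eq_left hn]

theorem finite_setOf_multiset_sum_le {F : Set ℝ} (hF : F.Finite) (hF₀ : ∀ w ∈ F, 0 ≤ w)
    (C : ℝ) : {x : ℝ | ∃ m : Multiset ℝ, (∀ y ∈ m, y ∈ F) ∧ m.sum = x ∧ x ≤ C}.Finite := by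
  classical
  refine (finite_setOf_sum_natCast_mul_le (w := ((↑) : hF.toFinset → ℝ))
    (fun w => hF₀ w (hF.mem_toFinset.1 w.2)) C).subset ?_
  rintro _ ⟨m, hmF, rfl, hC⟩
  refine ⟨fun w => m.count (w : ℝ), ?_, hC⟩
  have hsub : m.toFinset ⊆ hF.toFinset := fun y hy =>
    hF.mem_toFinset.2 (hmF y (Multiset.mem_toFinset.1 hy))
  rw [Finset.sum_multiset_count_of_subset m _ hsub, ← Finset.sum_coe_sort hF.toFinset]
  simp only [nsmul_eq_mul]

theorem factorizationValue_nonneg {G : Type*} {φ : G → ℝ} {t : ℝ} (hφ₀ : ∀ β, 0 ≤ φ β) {N : ℕ} (f : Fin (N + 1) → G) :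
    0 ≤ (∑ i, φ (f i) ^ t) ^ (1 / t) :=
  Real.rpow_nonneg (Finset.sum_nonneg fun _ _ => Real.rpow_nonneg (hφ₀ _) t) _

section Factorizations

variable {G : Type*} [CommGroup G] {φ : G → ℝ} {t : ℝ} {α : G}

variable (φ t α) in
def factorizationValues (S : Set G) : Set ℝ :=
  {x | ∃ (N : ℕ) (f : Fin (N + 1) → G),
    (∀ i, f i ∈ S) ∧ α = ∏ i, f i ∧ x = (∑ i, φ (f i) ^ t) ^ (1 / t)}

theorem replaces_iff {S : Set G} :
    Replaces φ t α S ↔ IsGLB (factorizationValues φ t α S) (metricVersion φ t α) :=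
  Iff.rfl

theorem metricVersion_le (hφ₀ : ∀ β, 0 ≤ φ β) {N : ℕ} {f : Fin (N + 1) → G}
    (hf : α = ∏ i, f i) : metricVersion φ t α ≤ (∑ i, φ (f i) ^ t) ^ (1 / t) :=
  csInf_le ⟨0, by rintro _ ⟨N, f, -, rfl⟩; exact factorizationValue_nonneg hφ₀ f⟩ ⟨N, f, hf, rfl⟩

theorem InfAttained.exists_finite_replaces (hφ₀ : ∀ β, 0 ≤ φ β) (h : InfAttained φ t α) :
    ∃ R : Set G, R.Finite ∧ (1 : G) ∈ R ∧ Replaces φ t α R := by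
  obtain ⟨N, f, hf, hval⟩ := h
  refine ⟨insert 1 (range f), (finite_range f).insert 1, mem_insert 1 _, ?_⟩
  refine IsLeast.isGLB ⟨⟨N, f, fun i => mem_insert_of_mem 1 ⟨i, rfl⟩, hf, hval⟩, ?_⟩
  rintro _ ⟨N', f', -, hf', rfl⟩
  exact metricVersion_le hφ₀ hf'

theorem finite_factorizationValues_inter_Iic (hφ₀ : ∀ β, 0 ≤ φ β) (ht : 0 < t) {S : Set G}
    (hS : (φ '' S).Finite) (M : ℝ) : (factorizationValues φ t α S ∩ Iic M).Finite := by
  refine ((finite_setOf_multiset_sum_le (hS.image (· ^ t)) ?_ (M ^ t)).image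
    (· ^ (1 / t))).subset ?_
  · rintro _ ⟨_, ⟨β, -, rfl⟩, rfl⟩
    exact Real.rpow_nonneg (hφ₀ β) t
  rintro _ ⟨⟨N, f, hfS, -, rfl⟩, hM⟩
  refine ⟨_, ⟨Finset.univ.val.map fun i => φ (f i) ^ t, ?_, rfl, ?_⟩, rfl⟩
  · simp only [Multiset.mem_map]
    rintro _ ⟨i, -, rfl⟩
    exact ⟨φ (f i), ⟨f i, hfS i, rfl⟩, rfl⟩
  · have hsum : 0 ≤ ∑ i, φ (f i) ^ t :=
      Finset.sum_nonneg fun _ _ => Real.rpow_nonneg (hφ₀ _) t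
    calc (Finset.univ.val.map fun i => φ (f i) ^ t).sum
        = ((∑ i, φ (f i) ^ t) ^ (1 / t)) ^ t := by
          rw [one_div, Real.rpow_inv_rpow hsum ht.ne']; rfl
      _ ≤ M ^ t := Real.rpow_le_rpow (factorizationValue_nonneg hφ₀ f) hM ht.le

theorem Replaces.infAttained (hφ₀ : ∀ β, 0 ≤ φ β) (ht : 0 < t) {S : Set G}
    (hS : (φ '' S).Finite) (h : Replaces φ t α S) : InfAttained φ t α := by
  obtain ⟨N, f, -, hf, hval⟩ := (replaces_iff.1 h).mem_of_finite_inter_Iic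
    (lt_add_one _) (finite_factorizationValues_inter_Iic hφ₀ ht hS _)
  exact ⟨N, f, hf, hval⟩

end Factorizations

/-- For a height `φ` on `G`, `α ∈ G`, and `t ∈ (0,∞)`, the following are equivalent:
(i) the infimum in the definition of `φ_t(α)` is attained;
(ii) there is a finite set `R ⊆ G` containing the identity that replaces `G` at `t`;
(iii) there is a set `S ⊆ G` containing the identity, with `φ(S)` finite, that
replaces `G` at `t`. -/
theorem infAttained_tfae {G : Type*} [CommGroup G] (φ : G → ℝ) (hφ : IsHeight φ)
    (α : G) (t : ℝ) (ht : 0 < t) :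
    List.TFAE [InfAttained φ t α,
      ∃ R : Set G, R.Finite ∧ (1 : G) ∈ R ∧ Replaces φ t α R,
      ∃ S : Set G, (1 : G) ∈ S ∧ (φ '' S).Finite ∧ Replaces φ t α S] := by
  tfae_have 1 → 2 := InfAttained.exists_finite_replaces hφ.1
  tfae_have 2 → 3 := fun ⟨R, hR, hR₁, hrep⟩ => ⟨R, hR₁, hR.image φ, hrep⟩
  tfae_have 3 → 1 := fun ⟨_, _, hS, hrep⟩ => hrep.infAttained hφ.1 ht hS
  tfae_finish
end

section
/- Let G be a multiplicatively written abelian group, let φ : G → [0,∞) be a height on G, fix α ∈ G, and let J ⊆ (0,∞) be a bounded set. Suppose there exists a set S ⊆ G containing the identity, with φ(S) finite, such that S replaces G at every t ∈ J. Then there exists a finite set D of factorizations of α with all factors in S (i.e., a finite set of finite tuples (α_1, …, α_N) with each α_n ∈ S and α = ∏_{n=1}^N α_n) such that φ_t(α) = min{(∑_{n=1}^N φ(α_n)^t)^(1/t) : (α_1,…,α_N) ∈ D} for all t ∈ J. In particular, there exists a finite set 𝒳 of finitely supported real sequences such that φ_t(α) = min{‖x‖_t : x ∈ 𝒳} for all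 t ∈ J. -/
open scoped BigOperators

theorem Set.Finite.setOf_multiset_card_le {α : Type*} {s : Set α} (hs : s.Finite) (k : ℕ) :
    {m : Multiset α | (∀ x ∈ m, x ∈ s) ∧ Multiset.card m ≤ k}.Finite := by
  have := hs.to_subtype
  refine ((Set.finite_Iic k).biUnion fun n _ =>
    Set.finite_range fun v : Sym s n => (v : Multiset s).map Subtype.val).subset ?_
  rintro m ⟨hm, hk⟩
  lift m to Multiset s using hm
  exact Set.mem_biUnion (x := Multiset.card m) (by simpa using hk) ⟨⟨_, rfl⟩, rfl⟩

theorem Set.Finite.exists_pos_le_of_pos {s : Set ℝ} (hs : s.Finite) (hpos : ∀ x ∈ s, 0 < x) :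
    ∃ v > 0, ∀ x ∈ s, v ≤ x := by
  obtain ⟨v, hv, hmin⟩ :=
    Set.exists_min_image (insert 1 s) id (hs.insert 1) ⟨1, Set.mem_insert _ _⟩
  refine ⟨v, ?_, fun x hx => hmin x (Set.mem_insert_of_mem _ hx)⟩
  rcases hv with rfl | hv
  exacts [one_pos, hpos v hv]

theorem Real.rpow_le_max_one_rpow {x t T : ℝ} (hx : 0 ≤ x) (ht : 0 ≤ t) (htT : t ≤ T) :
    x ^ t ≤ max 1 x ^ T :=
  (Real.rpow_le_rpow hx (le_max_right 1 x) ht).trans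
    (Real.rpow_le_rpow_of_exponent_le (le_max_left 1 x) htT)

section NonzeroValues

variable {ι κ : Type*} [Fintype ι] [Fintype κ]

noncomputable def nonzeroValues (a : ι → ℝ) : Multiset ℝ :=
  (Finset.univ.val.map a).filter (· ≠ 0)

lemma nonzeroValues_eq_map (a : ι → ℝ) :
    nonzeroValues a = (Finset.univ.filter (a · ≠ 0)).val.map a :=
  Multiset.filter_map _ _ _

lemma mem_nonzeroValues {a : ι → ℝ} {x : ℝ} : x ∈ nonzeroValues a ↔ x ≠ 0 ∧ ∃ i, a i = x := by
  simp [nonzeroValues, and_comm]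

lemma card_nonzeroValues_le (a : ι → ℝ) : Multiset.card (nonzeroValues a) ≤ Fintype.card ι :=
  (Multiset.card_le_card (Multiset.filter_le _ _)).trans (by simp)

lemma sum_rpow_eq_sum_nonzeroValues (a : ι → ℝ) {t : ℝ} (ht : t ≠ 0) :
    ∑ i, a i ^ t = ((nonzeroValues a).map (· ^ t)).sum := by
  rw [nonzeroValues_eq_map, Multiset.map_map, Finset.sum_map_val]
  refine (Finset.sum_filter_of_ne fun i _ h => ?_).symm
  contrapose! h
  simp only [h, Real.zero_rpow ht]

lemma sum_rpow_eq_of_nonzeroValues_eq {a : ι → ℝ} {b : κ → ℝ}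
    (h : nonzeroValues a = nonzeroValues b) {t : ℝ} (ht : t ≠ 0) :
    ∑ i, a i ^ t = ∑ j, b j ^ t := by
  rw [sum_rpow_eq_sum_nonzeroValues a ht, sum_rpow_eq_sum_nonzeroValues b ht, h]

lemma card_nonzeroValues_mul_rpow_le_sum_rpow {a : ι → ℝ} {v t : ℝ} (hv : 0 ≤ v) (ht : 0 < t)
    (hva : ∀ x ∈ nonzeroValues a, v ≤ x) :
    Multiset.card (nonzeroValues a) * v ^ t ≤ ∑ i, a i ^ t := by
  rw [sum_rpow_eq_sum_nonzeroValues a ht.ne', ← nsmul_eq_mul, ← Multiset.card_map (· ^ t)]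
  refine Multiset.card_nsmul_le_sum fun y hy => ?_
  obtain ⟨x, hx, rfl⟩ := Multiset.mem_map.mp hy
  exact Real.rpow_le_rpow hv (hva x hx) ht.le

lemma sum_rpow_le_mul_rpow {a : ι → ℝ} {v t T : ℝ} (ha : ∀ i, 0 ≤ a i) (hv : 0 < v)
    (ht : 0 ≤ t) (htT : t ≤ T) :
    ∑ i, a i ^ t ≤ (∑ i, max 1 (a i / v) ^ T) * v ^ t := by
  rw [Finset.sum_mul]
  refine Finset.sum_le_sum fun i _ => ?_
  calc a i ^ t = (a i / v) ^ t * v ^ t := by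
        rw [← Real.mul_rpow (div_nonneg (ha i) hv.le) hv.le, div_mul_cancel₀ _ hv.ne']
    _ ≤ max 1 (a i / v) ^ T * v ^ t := by
        gcongr
        exact Real.rpow_le_max_one_rpow (div_nonneg (ha i) hv.le) ht htT

lemma sum_rpow_le_sum_rpow_of_le_card {a : ι → ℝ} {b : κ → ℝ} {v t T : ℝ}
    (ha : ∀ i, 0 ≤ a i) (hv : 0 < v) (hvb : ∀ x ∈ nonzeroValues b, v ≤ x) (ht : 0 < t)
    (htT : t ≤ T) (hcard : ∑ i, max 1 (a i / v) ^ T ≤ Multiset.card (nonzeroValues b)) :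
    ∑ i, a i ^ t ≤ ∑ j, b j ^ t :=
  calc ∑ i, a i ^ t ≤ (∑ i, max 1 (a i / v) ^ T) * v ^ t := sum_rpow_le_mul_rpow ha hv ht.le htT
    _ ≤ Multiset.card (nonzeroValues b) * v ^ t := by gcongr
    _ ≤ ∑ j, b j ^ t := card_nonzeroValues_mul_rpow_le_sum_rpow hv.le ht hvb

end NonzeroValues

theorem IsGLB.isLeast_image_of_forall_exists_le {ι β : Type*} [LinearOrder β] [NoTopOrder β]
    {f : ι → β} {A D : Set ι} {m : β} (hm : IsGLB (f '' A) m) (hDA : D ⊆ A) (hD : D.Finite)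
    (hdom : ∀ a ∈ A, ∃ d ∈ D, f d ≤ f a) : IsLeast (f '' D) m := by
  obtain ⟨a, ha⟩ := hm.nonempty.of_image
  obtain ⟨d₀, hd₀, hmin⟩ := Set.exists_min_image D f hD (let ⟨d, hd, _⟩ := hdom a ha; ⟨d, hd⟩)
  have hm_eq : f d₀ = m := by
    refine le_antisymm (hm.2 ?_) (hm.1 ⟨d₀, hDA hd₀, rfl⟩)
    rintro _ ⟨a, ha, rfl⟩
    obtain ⟨d, hd, hda⟩ := hdom a ha
    exact (hmin d hd).trans hda
  exact ⟨⟨d₀, hd₀, hm_eq⟩, fun _ hx => hm.1 (Set.image_mono hDA hx)⟩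

lemma ltNorm_toFinsupp_ofFn {n : ℕ} (a : Fin n → ℝ) {t : ℝ} (ht : t ≠ 0) :
    ltNorm (List.ofFn a).toFinsupp t = (∑ i, |a i| ^ t) ^ (1 / t) := by
  rw [ltNorm, Finset.sum_subset (List.toFinsupp_support_subset _) fun k _ hk => by
    rw [Finsupp.notMem_support_iff.mp hk, abs_zero, Real.zero_rpow ht], List.length_ofFn,
    ← Fin.sum_univ_eq_sum_range]
  simp

section Factorizations

variable {G : Type*} [CommGroup G]

def factorizationsIn (S : Set G) (α : G) : Set ((N : ℕ) × (Fin (N + 1) → G)) :=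
  {d | (∀ i, d.2 i ∈ S) ∧ α = ∏ i, d.2 i}

lemma replaces_iff_s11 {φ : G → ℝ} {t : ℝ} {α : G} {S : Set G} :
    Replaces φ t α S ↔ IsGLB ((fun d => (∑ i, φ (d.2 i) ^ t) ^ (1 / t)) '' factorizationsIn S α)
      (metricVersion φ t α) := by
  refine iff_of_eq (congrArg (IsGLB · _) (Set.ext fun x => ?_))
  constructor
  · rintro ⟨N, f, hS, hα, rfl⟩
    exact ⟨⟨N, f⟩, ⟨hS, hα⟩, rfl⟩
  · rintro ⟨d, ⟨hS, hα⟩, rfl⟩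
    exact ⟨d.1, d.2, hS, hα, rfl⟩

end Factorizations

theorem exists_finite_dominating_subset {G : Type*} {φ : G → ℝ} (hφ : ∀ g, 0 ≤ φ g)
    {A : Set ((N : ℕ) × (Fin (N + 1) → G))} {W : Set ℝ} (hW : W.Finite)
    (hAW : ∀ d ∈ A, ∀ i, φ (d.2 i) ∈ W) (T : ℝ) :
    ∃ D ⊆ A, D.Finite ∧ ∀ d ∈ A, ∃ d' ∈ D, ∀ t ∈ Set.Ioc 0 T,
      ∑ i, φ (d'.2 i) ^ t ≤ ∑ i, φ (d.2 i) ^ t := by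
  rcases A.eq_empty_or_nonempty with rfl | ⟨d₀, hd₀⟩
  · exact ⟨∅, subset_rfl, Set.finite_empty, fun d hd => hd.elim⟩
  set profile := fun d : (N : ℕ) × (Fin (N + 1) → G) => nonzeroValues fun i => φ (d.2 i)
  have hprofile : ∀ d ∈ A, ∀ x ∈ profile d, x ∈ W ∧ 0 < x := fun d hd x hx => by
    obtain ⟨hx0, i, rfl⟩ := mem_nonzeroValues.mp hx
    exact ⟨hAW d hd i, (hφ _).lt_of_ne' hx0⟩
  obtain ⟨v, hv, hvW⟩ := (hW.inter_of_left (Set.Ioi 0)).exists_pos_le_of_pos fun x hx => hx.2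
  -- beyond the first term a factorization loses to `d₀`; the second term keeps `d₀` in `B`
  set K := max ⌈∑ i, max 1 (φ (d₀.2 i) / v) ^ T⌉₊ (d₀.1 + 1)
  set B := {d ∈ A | Multiset.card (profile d) ≤ K}
  have hB : (profile '' B).Finite := (hW.setOf_multiset_card_le K).subset <| by
    rintro _ ⟨d, ⟨hd, hK⟩, rfl⟩
    exact ⟨fun x hx => (hprofile d hd x hx).1, hK⟩
  obtain ⟨D, hDB, hD, hDimage⟩ := Set.exists_subset_image_finite_and.mp ⟨_, subset_rfl, hB, rfl⟩
  have hrep : ∀ d ∈ B, ∃ d' ∈ D, ∀ t ∈ Set.Ioc 0 T,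
      ∑ i, φ (d'.2 i) ^ t = ∑ i, φ (d.2 i) ^ t := fun d hd => by
    obtain ⟨d', hd', hdd'⟩ := hDimage.symm ▸ Set.mem_image_of_mem profile hd
    exact ⟨d', hd', fun t ht => sum_rpow_eq_of_nonzeroValues_eq hdd' ht.1.ne'⟩
  refine ⟨D, hDB.trans (Set.sep_subset _ _), hD, fun d hd => ?_⟩
  by_cases hdK : Multiset.card (profile d) ≤ K
  · obtain ⟨d', hd', heq⟩ := hrep d ⟨hd, hdK⟩
    exact ⟨d', hd', fun t ht => (heq t ht).le⟩
  · have hd₀B : d₀ ∈ B := ⟨hd₀, (card_nonzeroValues_le _).trans (by simp [K])⟩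
    obtain ⟨d', hd', heq⟩ := hrep d₀ hd₀B
    refine ⟨d', hd', fun t ht => (heq t ht).trans_le ?_⟩
    refine sum_rpow_le_sum_rpow_of_le_card (fun i => hφ _) hv
      (fun x hx => hvW x (hprofile d hd x hx)) ht.1 ht.2 ?_
    calc _ ≤ (K : ℝ) := (Nat.le_ceil _).trans (by exact_mod_cast le_max_left _ _)
      _ ≤ _ := by exact_mod_cast (not_le.mp hdK).le

theorem finite_min_of_replaces_bounded_general {G : Type*} [CommGroup G] (φ : G → ℝ)
    (hφ : IsHeight φ) (α : G) (J : Set ℝ) (hJ : J ⊆ Set.Ioi 0) (hJbd : BddAbove J)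
    (S : Set G) (hSfin : (φ '' S).Finite)
    (hrep : ∀ t ∈ J, Replaces φ t α S) :
    (∃ D : Set ((N : ℕ) × (Fin (N + 1) → G)), D.Finite ∧
      (∀ d ∈ D, (∀ i, d.2 i ∈ S) ∧ α = ∏ i, d.2 i) ∧
      ∀ t ∈ J, IsLeast {r : ℝ | ∃ d ∈ D, r = (∑ i, φ (d.2 i) ^ t) ^ (1 / t)}
        (metricVersion φ t α)) ∧
    ∃ 𝒳 : Set (ℕ →₀ ℝ), 𝒳.Finite ∧
      ∀ t ∈ J, IsLeast ((fun x => ltNorm x t) '' 𝒳) (metricVersion φ t α) := by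
  obtain ⟨T, hT⟩ := hJbd
  obtain ⟨D, hDS, hD, hdom⟩ := exists_finite_dominating_subset (A := factorizationsIn S α)
    hφ.1 hSfin (fun d hd i => Set.mem_image_of_mem φ (hd.1 i)) T
  have hleast : ∀ t ∈ J, IsLeast ((fun d => (∑ i, φ (d.2 i) ^ t) ^ (1 / t)) '' D)
      (metricVersion φ t α) := fun t ht =>
    (replaces_iff_s11.mp (hrep t ht)).isLeast_image_of_forall_exists_le hDS hD fun d hd => by
      obtain ⟨d', hd', hle⟩ := hdom d hd
      exact ⟨d', hd', Real.rpow_le_rpow (Finset.sum_nonneg fun i _ => Real.rpow_nonneg (hφ.1 _) t)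
        (hle t ⟨hJ ht, hT ht⟩) (one_div_nonneg.mpr (hJ ht).le)⟩
  refine ⟨⟨D, hD, hDS, fun t ht => ?_⟩,
    (fun d => (List.ofFn fun i => φ (d.2 i)).toFinsupp) '' D, hD.image _, fun t ht => ?_⟩
  · convert hleast t ht using 2
    exact Set.ext fun r => exists_congr fun _ => and_congr_right fun _ => eq_comm
  · convert hleast t ht using 1
    rw [Set.image_image]
    refine Set.image_congr fun d _ => ?_
    simp only [ltNorm_toFinsupp_ofFn _ (hJ ht).ne', abs_of_nonneg (hφ.1 _)]

/-- Suppose `J ⊆ (0,∞)` is bounded and there is a set `S ⊆ G` containing the identity,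
with `φ(S)` finite, replacing `G` at every `t ∈ J`.  Then there is a finite set `D` of
factorizations of `α` with all factors in `S` such that
`φ_t(α) = min{(∑ₙ φ(αₙ)^t)^(1/t) : (α₁,…,α_N) ∈ D}` for all `t ∈ J`; in particular there
is a finite set `𝒳` of finitely supported real sequences with
`φ_t(α) = min{‖x‖_t : x ∈ 𝒳}` for all `t ∈ J`. -/
theorem finite_min_of_replaces_bounded {G : Type*} [CommGroup G] (φ : G → ℝ)
    (hφ : IsHeight φ) (α : G) (J : Set ℝ) (hJ : J ⊆ Set.Ioi 0) (hJbd : BddAbove J)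
    (S : Set G) (hS1 : (1 : G) ∈ S) (hSfin : (φ '' S).Finite)
    (hrep : ∀ t ∈ J, Replaces φ t α S) :
    (∃ D : Set ((N : ℕ) × (Fin (N + 1) → G)), D.Finite ∧
      (∀ d ∈ D, (∀ i, d.2 i ∈ S) ∧ α = ∏ i, d.2 i) ∧
      ∀ t ∈ J, IsLeast {r : ℝ | ∃ d ∈ D, r = (∑ i, φ (d.2 i) ^ t) ^ (1 / t)}
        (metricVersion φ t α)) ∧
    ∃ 𝒳 : Set (ℕ →₀ ℝ), 𝒳.Finite ∧
      ∀ t ∈ J, IsLeast ((fun x => ltNorm x t) '' 𝒳) (metricVersion φ t α) :=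
  finite_min_of_replaces_bounded_general φ hφ α J hJ hJbd S hSfin hrep
end

section
/- Let x and y be finitely supported sequences of real numbers, and suppose that ‖x‖_t = ‖y‖_t for all t in a subset of (0,∞) that has a limit point in ℝ. Then ‖x‖_t = ‖y‖_t for all t ∈ (0,∞). -/
open scoped BigOperators

/-! The power sum `t ↦ ∑ₙ |xₙ|^t` is a finite sum of exponentials `exp (t log |xₙ|)`, hence
real-analytic on all of `ℝ`, and for `t > 0` it equals `‖x‖_t^t`. By the identity theorem, two such
power sums that agree on a set with an accumulation point agree everywhere, and `‖x‖_t` is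
recovered from the power sum. -/

open Set

lemma analyticOnNhd_const_rpow {a : ℝ} (ha : 0 < a) :
    AnalyticOnNhd ℝ (fun t : ℝ => a ^ t) univ := by
  simp_rw [Real.rpow_def_of_pos ha]
  exact (analyticOnNhd_const.mul analyticOnNhd_id).rexp

lemma analyticOnNhd_sum_abs_rpow (x : ℕ →₀ ℝ) :
    AnalyticOnNhd ℝ (fun t : ℝ => ∑ n ∈ x.support, |x n| ^ t) univ :=
  x.support.analyticOnNhd_fun_sum fun _ hn =>
    analyticOnNhd_const_rpow (abs_pos.mpr (Finsupp.mem_support_iff.mp hn))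

lemma ltNorm_rpow_self (x : ℕ →₀ ℝ) {t : ℝ} (ht : t ≠ 0) :
    ltNorm x t ^ t = ∑ n ∈ x.support, |x n| ^ t := by
  have hsum : 0 ≤ ∑ n ∈ x.support, |x n| ^ t :=
    Finset.sum_nonneg fun _ _ => Real.rpow_nonneg (abs_nonneg _) _
  rw [ltNorm, ← Real.rpow_mul hsum, one_div_mul_cancel ht, Real.rpow_one]

/-- If `x` and `y` are finitely supported real sequences with `‖x‖_t = ‖y‖_t` for all `t` in
a subset of `(0,∞)` having a limit point in `ℝ`, then `‖x‖_t = ‖y‖_t` for all `t ∈ (0,∞)`. -/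
theorem ltNorm_eq_of_eq_on_accumulating {x y : ℕ →₀ ℝ} {K : Set ℝ}
    (hK : K ⊆ Set.Ioi 0) (hacc : ∃ c : ℝ, AccPt c (Filter.principal K))
    (heq : ∀ t ∈ K, ltNorm x t = ltNorm y t) :
    ∀ t ∈ Set.Ioi (0 : ℝ), ltNorm x t = ltNorm y t := by
  obtain ⟨c, hc⟩ := hacc
  have hsum_eq_on_K : ∀ t ∈ K, ∑ n ∈ x.support, |x n| ^ t = ∑ n ∈ y.support, |y n| ^ t :=
    fun t ht => by
      have ht0 : t ≠ 0 := (hK ht).ne'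
      rw [← ltNorm_rpow_self x ht0, ← ltNorm_rpow_self y ht0, heq t ht]
  have hsum_eq : EqOn (fun t : ℝ => ∑ n ∈ x.support, |x n| ^ t)
      (fun t : ℝ => ∑ n ∈ y.support, |y n| ^ t) univ :=
    (analyticOnNhd_sum_abs_rpow x).eqOn_of_preconnected_of_frequently_eq
      (analyticOnNhd_sum_abs_rpow y) isPreconnected_univ (mem_univ c)
      ((accPt_iff_frequently_nhdsNE.mp hc).mono hsum_eq_on_K)
  intro t _
  exact congrArg (· ^ (1 / t)) (hsum_eq (mem_univ t))
end

section
/- Let a_1, …, a_K be nonzero real numbers and b_1 > b_2 > ⋯ > b_K > 0 be real numbers with K ≥ 1, and define F(t) = ∑_{k=1}^K a_k b_k^t. Then F has only finitely many zeros in (0,∞). Consequently, if x and y are finitely supported real sequences such that the functions t ↦ ‖x‖_t and t ↦ ‖y‖_t on (0,∞) are not identical, then the set {t ∈ (0,∞) : ‖x‖_t = ‖y‖_t} is finite. -/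
open scoped BigOperators

/-!
Both parts concern the zeros of an exponential sum `F(t) = ∑_β c_β β^t` over finitely many
positive bases `β` with nonzero coefficients: `‖x‖_t = ‖y‖_t` says `F(t) = 0` for
`c_β = #{n | |x_n| = β} - #{n | |y_n| = β}`, and `F` is not identically zero because the norm
functions differ. Such an `F` is real analytic and for large `t` dominated by the term with the
largest base, so it has no zeros on some `[T, ∞)`; on a compact interval the zeros of a nonzero
analytic function are isolated, hence finite in number.
-/

open Filter Topology Set

theorem AnalyticOnNhd.finite_zeros_of_isCompact {𝕜 E : Type*} [NontriviallyNormedField 𝕜]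
    [NormedAddCommGroup E] [NormedSpace 𝕜 E] {f : 𝕜 → E} {U K : Set 𝕜}
    (hf : AnalyticOnNhd 𝕜 f U) (hU : IsPreconnected U) (hf0 : ¬EqOn f 0 U)
    (hK : IsCompact K) (hKU : K ⊆ U) : {z ∈ K | f z = 0}.Finite := by
  have hne := (hf.eqOn_zero_or_eventually_ne_zero_of_preconnected hU).resolve_left hf0
  exact (hK.finite_sdiff_of_mem_codiscreteWithin (codiscreteWithin_mono hKU hne)).subset
    fun z ⟨hz, hfz⟩ => ⟨hz, not_not_intro hfz⟩

noncomputable def expSum (t : ℝ) : (ℝ →₀ ℝ) →ₗ[ℝ] ℝ :=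
  Finsupp.linearCombination ℝ fun β : ℝ => β ^ t

theorem expSum_apply (t : ℝ) (c : ℝ →₀ ℝ) : expSum t c = ∑ β ∈ c.support, c β * β ^ t := by
  simp [expSum, Finsupp.linearCombination_apply, Finsupp.sum]

theorem expSum_single (t β a : ℝ) : expSum t (Finsupp.single β a) = a * β ^ t := by
  simp [expSum]

theorem expSum_sum_single {ι : Type*} (s : Finset ι) (b a : ι → ℝ) (t : ℝ) :
    expSum t (∑ i ∈ s, Finsupp.single (b i) (a i)) = ∑ i ∈ s, a i * b i ^ t := by
  simp only [map_sum, expSum_single]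

theorem sum_single_apply_of_injective {ι α M : Type*} [AddCommMonoid M] {s : Finset ι}
    {b : ι → α} (hb : Function.Injective b) (a : ι → M) {j : ι} (hj : j ∈ s) :
    (∑ i ∈ s, Finsupp.single (b i) (a i)) (b j) = a j := by
  rw [Finsupp.finsetSum_apply, Finset.sum_eq_single_of_mem j hj fun i _ hij =>
    Finsupp.single_eq_of_ne (hb.ne hij).symm, Finsupp.single_eq_same]

theorem pos_of_mem_support_sum_single {ι M : Type*} [AddCommMonoid M] {s : Finset ι}
    {b : ι → ℝ} {a : ι → M}
    (hb : ∀ i ∈ s, 0 < b i) {β : ℝ} (hβ : β ∈ (∑ i ∈ s, Finsupp.single (b i) (a i)).support) :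
    0 < β := by
  obtain ⟨i, hi, hβi⟩ := Finset.mem_biUnion.1 (Finsupp.support_finsetSum hβ)
  rw [Finset.mem_singleton.1 (Finsupp.support_single_subset hβi)]
  exact hb i hi

variable {c : ℝ →₀ ℝ}

theorem analyticOnNhd_expSum (hc : ∀ β ∈ c.support, 0 < β) :
    AnalyticOnNhd ℝ (fun t => expSum t c) univ := by
  simp_rw [expSum_apply]
  refine Finset.analyticOnNhd_fun_sum _ fun β hβ => ?_
  have hexp : (fun t : ℝ => c β * β ^ t) = fun t => c β * Real.exp (Real.log β * t) := by
    funext t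
    rw [Real.rpow_def_of_pos (hc β hβ)]
  rw [hexp]
  exact analyticOnNhd_const.mul (analyticOnNhd_const.mul analyticOnNhd_id).rexp

theorem tendsto_expSum_div_rpow_atTop {β₀ : ℝ} (hc : ∀ β ∈ c.support, 0 < β ∧ β < β₀) :
    Tendsto (fun t => expSum t c / β₀ ^ t) atTop (𝓝 0) := by
  simp_rw [expSum_apply, Finset.sum_div]
  rw [← Finset.sum_const_zero (s := c.support)]
  refine tendsto_finsetSum _ fun β hβ => ?_
  obtain ⟨hβ_pos, hβ_lt⟩ := hc β hβ
  have hβ₀_pos := hβ_pos.trans hβ_lt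
  have hratio : (fun t : ℝ => c β * β ^ t / β₀ ^ t) = fun t => c β * (β / β₀) ^ t := by
    funext t
    rw [Real.div_rpow hβ_pos.le hβ₀_pos.le, mul_div_assoc]
  rw [hratio]
  simpa using (tendsto_rpow_atTop_of_base_lt_one _ (neg_one_lt_zero.trans (by positivity))
    ((div_lt_one hβ₀_pos).2 hβ_lt)).const_mul (c β)

theorem eventually_expSum_ne_zero (hc : ∀ β ∈ c.support, 0 < β) (h0 : c ≠ 0) :
    ∀ᶠ t in atTop, expSum t c ≠ 0 := by
  set β₀ := c.support.max' (Finsupp.support_nonempty_iff.2 h0)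
  have hβ₀ : β₀ ∈ c.support := Finset.max'_mem _ _
  have hsplit (t : ℝ) : expSum t c = c β₀ * β₀ ^ t + expSum t (c.erase β₀) := by
    conv_lhs => rw [← Finsupp.single_add_erase β₀ c]
    rw [map_add, expSum_single]
  have hrest : Tendsto (fun t => expSum t (c.erase β₀) / β₀ ^ t) atTop (𝓝 0) := by
    refine tendsto_expSum_div_rpow_atTop fun β hβ => ?_
    rw [Finsupp.support_erase, Finset.mem_erase] at hβ
    exact ⟨hc β hβ.2, lt_of_le_of_ne (c.support.le_max' β hβ.2) hβ.1⟩
  have hlim : Tendsto (fun t => expSum t c / β₀ ^ t) atTop (𝓝 (c β₀)) := by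
    have hβ₀_pos := hc β₀ hβ₀
    simpa [hsplit, add_div, mul_div_assoc, (Real.rpow_pos_of_pos hβ₀_pos _).ne']
      using hrest.const_add (c β₀)
  filter_upwards [hlim.eventually_ne (Finsupp.mem_support_iff.1 hβ₀)] with t ht hzero
  exact ht (by rw [hzero, zero_div])

theorem finite_zeros_expSum (hc : ∀ β ∈ c.support, 0 < β) (h0 : c ≠ 0) {S : Set ℝ}
    (hS : BddBelow S) : {t ∈ S | expSum t c = 0}.Finite := by
  obtain ⟨T, hT⟩ := eventually_atTop.1 (eventually_expSum_ne_zero hc h0)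
  obtain ⟨s, hs⟩ := hS
  have hfin := (analyticOnNhd_expSum hc).finite_zeros_of_isCompact isPreconnected_univ
    (fun h => hT T le_rfl (h (mem_univ T))) isCompact_Icc (subset_univ (Icc s T))
  refine hfin.subset fun t ⟨ht, hzero⟩ => ⟨⟨hs ht, ?_⟩, hzero⟩
  exact le_of_not_gt fun hTt => hT t hTt.le hzero

/-- `absCount x β = #{n | |x n| = β}` for `β ≠ 0`. -/
noncomputable def absCount (x : ℕ →₀ ℝ) : ℝ →₀ ℝ :=
  ∑ n ∈ x.support, Finsupp.single |x n| 1

theorem expSum_absCount (x : ℕ →₀ ℝ) (t : ℝ) :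
    expSum t (absCount x) = ∑ n ∈ x.support, |x n| ^ t := by
  simp only [absCount, expSum_sum_single, one_mul]

theorem pos_of_mem_support_absCount {x : ℕ →₀ ℝ} {β : ℝ} (hβ : β ∈ (absCount x).support) :
    0 < β :=
  pos_of_mem_support_sum_single (fun _ hn => abs_pos.2 (Finsupp.mem_support_iff.1 hn)) hβ

theorem ltNorm_eq_expSum_absCount (x : ℕ →₀ ℝ) (t : ℝ) :
    ltNorm x t = expSum t (absCount x) ^ (1 / t) := by
  rw [expSum_absCount, ltNorm]

theorem expSum_absCount_eq_of_ltNorm_eq {x y : ℕ →₀ ℝ} {t : ℝ} (ht : t ≠ 0)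
    (h : ltNorm x t = ltNorm y t) : expSum t (absCount x) = expSum t (absCount y) := by
  rw [ltNorm_eq_expSum_absCount, ltNorm_eq_expSum_absCount] at h
  refine (Real.rpow_left_inj ?_ ?_ (one_div_ne_zero ht)).1 h <;>
  · rw [expSum_absCount]
    positivity

/-- Let `a₁, …, a_K` be nonzero reals and `b₁ > b₂ > ⋯ > b_K > 0` with `K ≥ 1`, and set
`F(t) = ∑ₖ aₖ bₖ^t`.  Then `F` has only finitely many zeros in `(0,∞)`.  Consequently, if
`x` and `y` are finitely supported real sequences whose norm functions `t ↦ ‖x‖_t` and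
`t ↦ ‖y‖_t` on `(0,∞)` are not identical, then `{t ∈ (0,∞) : ‖x‖_t = ‖y‖_t}` is finite. -/
theorem finite_zeros_exponential_sum (K : ℕ) (hK : 0 < K) (a b : Fin K → ℝ)
    (ha : ∀ k, a k ≠ 0) (hb : ∀ k, 0 < b k) (hmono : StrictAnti b) :
    {t ∈ Set.Ioi (0 : ℝ) | ∑ k, a k * b k ^ t = 0}.Finite ∧
      ∀ x y : ℕ →₀ ℝ, (∃ t : ℝ, 0 < t ∧ ltNorm x t ≠ ltNorm y t) →
        {t ∈ Set.Ioi (0 : ℝ) | ltNorm x t = ltNorm y t}.Finite := by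
  refine ⟨?_, fun x y ⟨t₀, _, hne⟩ => ?_⟩
  · have hsupp β (hβ : β ∈ (∑ k, Finsupp.single (b k) (a k)).support) : 0 < β :=
      pos_of_mem_support_sum_single (fun k _ => hb k) hβ
    have hc0 : ∑ k, Finsupp.single (b k) (a k) ≠ 0 := fun h => ha ⟨0, hK⟩ <| by
      rw [← sum_single_apply_of_injective hmono.injective a (Finset.mem_univ _), h,
        Finsupp.coe_zero, Pi.zero_apply]
    simpa only [expSum_sum_single] using finite_zeros_expSum hsupp hc0 bddBelow_Ioi
  · have hsupp β (hβ : β ∈ (absCount x - absCount y).support) : 0 < β := by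
      rcases Finset.mem_union.1 (Finsupp.support_sub hβ) with hβ | hβ <;>
      exact pos_of_mem_support_absCount hβ
    have hc0 : absCount x - absCount y ≠ 0 := fun h => by
      apply hne
      rw [ltNorm_eq_expSum_absCount, ltNorm_eq_expSum_absCount, sub_eq_zero.1 h]
    refine (finite_zeros_expSum hsupp hc0 bddBelow_Ioi).subset fun t ⟨ht, h⟩ => ⟨ht, ?_⟩
    rw [map_sub, sub_eq_zero]
    exact expSum_absCount_eq_of_ltNorm_eq (ne_of_gt ht) h
end

section
/- Let G be a multiplicatively written abelian group, let φ : G → [0,∞) be a height on G, fix α ∈ G, and let 0 ≤ a < b ≤ ∞. Then the open interval (a,b) is uniform (for φ and α) if and only if every point of (a,b) is standard relative to (a,b). -/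
open scoped BigOperators

/-!
For a finitely supported sequence `x`, the power sum `t ↦ ∑ₙ |xₙ|^t` is a finite sum of
exponentials `exp (t log |xₙ|)`, hence real analytic on all of `ℝ`, and `‖x‖_t` determines it
for `t ≠ 0`. By the identity theorem, two norm functions `t ↦ ‖x‖_t` that agree on a nonempty
open set agree everywhere. So the witnesses of neighbouring standard points have the same norm
function, and the set of points of `(a,b)` near which `φ_t(α)` is given by one fixed witness is
open and relatively closed, hence all of the connected interval `(a,b)`.
-/

open Set Filter Topology

noncomputable def powSum (x : ℕ →₀ ℝ) (t : ℝ) : ℝ :=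
  ∑ n ∈ x.support, |x n| ^ t

lemma powSum_nonneg (x : ℕ →₀ ℝ) (t : ℝ) : 0 ≤ powSum x t :=
  Finset.sum_nonneg fun _ _ => Real.rpow_nonneg (abs_nonneg _) _

lemma analyticOnNhd_powSum (x : ℕ →₀ ℝ) : AnalyticOnNhd ℝ (powSum x) univ := by
  refine Finset.analyticOnNhd_fun_sum _ fun n hn t _ => ?_
  have hpos : 0 < |x n| := abs_pos.mpr (Finsupp.mem_support_iff.mp hn)
  exact (analyticAt_const.mul analyticAt_id).rexp'.congr
    (.of_forall fun s => (Real.rpow_def_of_pos hpos s).symm)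

lemma powSum_eq_of_ltNorm_eq {x y : ℕ →₀ ℝ} {t : ℝ} (ht : t ≠ 0)
    (h : ltNorm x t = ltNorm y t) : powSum x t = powSum y t := by
  rw [← Real.rpow_inv_rpow (powSum_nonneg x t) ht, ← Real.rpow_inv_rpow (powSum_nonneg y t) ht]
  simp only [ltNorm, one_div] at h
  exact congrArg (· ^ t) h

lemma ltNorm_eq_of_eqOn {x y : ℕ →₀ ℝ} {U : Set ℝ} (hU : IsOpen U) (hne : U.Nonempty)
    (h : EqOn (ltNorm x) (ltNorm y) U) : ltNorm x = ltNorm y := by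
  obtain ⟨t, htU, ht⟩ := (dense_compl_singleton (0 : ℝ)).inter_open_nonempty U hU hne
  have hloc : powSum x =ᶠ[𝓝 t] powSum y :=
    eventuallyEq_of_mem ((hU.inter isOpen_compl_singleton).mem_nhds ⟨htU, ht⟩)
      fun s ⟨hsU, hs⟩ => powSum_eq_of_ltNorm_eq hs (h hsU)
  have hpow := (analyticOnNhd_powSum x).eq_of_eventuallyEq (analyticOnNhd_powSum y) hloc
  funext s
  exact congrArg (· ^ (1 / s)) (congrFun hpow s)

section Uniform

variable {G : Type*} [CommGroup G] {φ : G → ℝ} {α : G} {I : Set ℝ}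

lemma IsUniform.isStandardPt (hIo : IsOpen I) (hIc : I.OrdConnected) (hI : IsUniform φ α I)
    {t : ℝ} (ht : t ∈ I) : IsStandardPt φ α I t :=
  ⟨I, subset_rfl, hIo, hIc, ht, hI⟩

lemma isUniform_of_forall_isStandardPt (hI : IsPreconnected I)
    (hstd : ∀ t ∈ I, IsStandardPt φ α I t) : IsUniform φ α I := by
  rcases I.eq_empty_or_nonempty with rfl | ⟨t₀, ht₀⟩
  · exact ⟨0, fun _ => False.elim⟩
  obtain ⟨J₀, -, hJ₀, -, ht₀J₀, x₀, hx₀⟩ := hstd t₀ ht₀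
  set S : Set ℝ := {s | ∃ J, IsOpen J ∧ s ∈ J ∧ ∀ u ∈ J, metricVersion φ u α = ltNorm x₀ u}
  have hSopen : IsOpen S := isOpen_iff_forall_mem_open.mpr
    fun s ⟨J, hJ, hsJ, hJx₀⟩ => ⟨J, fun u hu => ⟨J, hJ, hu, hJx₀⟩, hJ, hsJ⟩
  have hSclosed : closure S ∩ I ⊆ S := by
    rintro t ⟨htS, htI⟩
    obtain ⟨J, -, hJ, -, htJ, y, hy⟩ := hstd t htI
    obtain ⟨s, hsJ, J', hJ', hsJ', hJ'x₀⟩ := mem_closure_iff_nhds.mp htS J (hJ.mem_nhds htJ)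
    have hyx₀ : ltNorm y = ltNorm x₀ :=
      ltNorm_eq_of_eqOn (hJ.inter hJ') ⟨s, hsJ, hsJ'⟩
        fun u ⟨huJ, huJ'⟩ => (hy u huJ).symm.trans (hJ'x₀ u huJ')
    exact ⟨J, hJ, htJ, fun u hu => (hy u hu).trans (congrFun hyx₀ u)⟩
  have hIS : I ⊆ S :=
    hI.subset_of_closure_inter_subset hSopen ⟨t₀, ht₀, J₀, hJ₀, ht₀J₀, hx₀⟩ hSclosed
  refine ⟨x₀, fun t ht => ?_⟩
  obtain ⟨J, -, htJ, hJx₀⟩ := hIS ht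
  exact hJx₀ t htJ

theorem isUniform_iff_forall_isStandardPt (hIo : IsOpen I) (hIc : I.OrdConnected) :
    IsUniform φ α I ↔ ∀ t ∈ I, IsStandardPt φ α I t :=
  ⟨fun hI _ ht => hI.isStandardPt hIo hIc ht,
    isUniform_of_forall_isStandardPt hIc.isPreconnected⟩

end Uniform

lemma setOf_lt_and_coe_lt_eq_preimage_Ioo (a : ℝ) (b : EReal) :
    {t : ℝ | a < t ∧ (t : EReal) < b} = ((↑) : ℝ → EReal) ⁻¹' Ioo (a : EReal) b := by
  ext t
  simp [EReal.coe_lt_coe_iff]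

theorem uniform_iff_forall_standard_general {G : Type*} [CommGroup G] (φ : G → ℝ)
    (α : G) (a : ℝ) (b : EReal) :
    IsUniform φ α {t : ℝ | a < t ∧ (t : EReal) < b} ↔
      ∀ t : ℝ, a < t → (t : EReal) < b →
        IsStandardPt φ α {s : ℝ | a < s ∧ (s : EReal) < b} t := by
  rw [setOf_lt_and_coe_lt_eq_preimage_Ioo, isUniform_iff_forall_isStandardPt
    (isOpen_Ioo.preimage continuous_coe_real_ereal)
    (ordConnected_Ioo.preimage_mono EReal.coe_strictMono.monotone)]
  exact ⟨fun h t hat htb => h t ⟨EReal.coe_lt_coe_iff.mpr hat, htb⟩,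
    fun h t ht => h t (EReal.coe_lt_coe_iff.mp ht.1) ht.2⟩

/-- Let `φ` be a height on `G`, `α ∈ G`, and `0 ≤ a < b ≤ ∞`.  The open interval `(a,b)`
is uniform (for `φ` and `α`) if and only if every point of `(a,b)` is standard relative
to `(a,b)`. -/
theorem uniform_iff_forall_standard {G : Type*} [CommGroup G] (φ : G → ℝ)
    (hφ : IsHeight φ) (α : G) (a : ℝ) (b : EReal) (ha : 0 ≤ a) (hab : (a : EReal) < b) :
    IsUniform φ α {t : ℝ | a < t ∧ (t : EReal) < b} ↔
      ∀ t : ℝ, a < t → (t : EReal) < b →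
        IsStandardPt φ α {s : ℝ | a < s ∧ (s : EReal) < b} t :=
  uniform_iff_forall_standard_general φ α a b
end

section
/- Let G be a multiplicatively written abelian group, let φ : G → [0,∞) be a height on G, fix α ∈ G, and let a ≥ 0. Suppose there exists a set S ⊆ G containing the identity, with φ(S) finite, that replaces G at every t ∈ (a,∞). Then there exist s ≥ a, N ∈ ℕ, and α_1, …, α_N ∈ S with α = ∏_{n=1}^N α_n such that φ_t(α) = (∑_{n=1}^N φ(α_n)^t)^(1/t) for all t ∈ (s,∞); in particular, there is a single finitely supported real sequence M with φ_t(α) = ‖M‖_t for all sufficiently large t, and there exists a finite set 𝒳 of finitely supported real sequences such that φ_t(α) = min{‖x‖_t : x ∈ 𝒳} for all t ∈ (a,∞). -/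
open scoped BigOperators

/-!
Record a factorization `α = ∏ αₙ` into `S` by the multiplicities `m : ℝ →₀ ℕ` of its nonzero
heights, which lie in the finite set `φ(S) \ {0}`; the `t`-th power of its value is then the power
sum `∑_c m(c) c^t`, which is monotone in `m`. By Dickson's lemma the vectors that occur have
finitely many minimal elements and every vector dominates one of them, so for each `t > a` the
infimum is a minimum over one finite set of factorizations. The difference of two power sums with
positive bases eventually has the sign of its coefficient at the largest base, so any two of
these finitely many candidates are eventually comparable, and one of them is the minimizer for all
large `t`.
-/

open Filter Set Topology

noncomputable def powerSum (m : ℝ →₀ ℕ) (t : ℝ) : ℝ :=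
  m.sum fun c n => n * c ^ t

lemma powerSum_eq_sum {m : ℝ →₀ ℕ} {E : Finset ℝ} (h : m.support ⊆ E) (t : ℝ) :
    powerSum m t = ∑ c ∈ E, m c * c ^ t :=
  Finsupp.sum_of_support_subset m h _ fun _ _ => by simp

lemma powerSum_nonneg {m : ℝ →₀ ℕ} (hm : ∀ c ∈ m.support, 0 ≤ c) (t : ℝ) :
    0 ≤ powerSum m t :=
  Finset.sum_nonneg fun c hc => by have := hm c hc; positivity

lemma powerSum_mono {m m' : ℝ →₀ ℕ} (h : m ≤ m') (hm' : ∀ c ∈ m'.support, 0 ≤ c) (t : ℝ) :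
    powerSum m t ≤ powerSum m' t := by
  rw [powerSum_eq_sum (Finsupp.support_mono h), powerSum_eq_sum subset_rfl]
  gcongr with c hc
  · exact Real.rpow_nonneg (hm' c hc) t
  · exact h c

lemma eventually_nonneg_or_nonpos_sum_mul_rpow (E : Finset ℝ) (hE : ∀ c ∈ E, 0 < c)
    (w : ℝ → ℝ) :
    (∀ᶠ t : ℝ in atTop, 0 ≤ ∑ c ∈ E, w c * c ^ t) ∨
      ∀ᶠ t : ℝ in atTop, ∑ c ∈ E, w c * c ^ t ≤ 0 := by
  classical
  rcases (E.filter (w · ≠ 0)).eq_empty_or_nonempty with hw | hw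
  · rw [Finset.filter_eq_empty_iff] at hw
    exact Or.inl <| Eventually.of_forall fun t =>
      (Finset.sum_eq_zero fun c hc => by simp [not_not.1 (hw hc)]).ge
  obtain ⟨c₀, hc₀, hmax⟩ := Finset.exists_max_image _ id hw
  rw [Finset.mem_filter] at hc₀
  have hc₀pos := hE c₀ hc₀.1
  -- After dividing by `c₀ ^ t`, every term but the one at `c₀` tends to zero.
  have hlim : Tendsto (fun t : ℝ => ∑ c ∈ E, w c * (c / c₀) ^ t) atTop (𝓝 (w c₀)) := by
    have : ∑ c ∈ E, (if c = c₀ then w c else 0) = w c₀ := by simp [hc₀.1]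
    rw [← this]
    refine tendsto_finsetSum _ fun c hc => ?_
    split_ifs with h
    · simp [h, div_self hc₀pos.ne']
    by_cases hwc : w c = 0
    · simp [hwc]
    have hlt : c < c₀ := (hmax c (Finset.mem_filter.2 ⟨hc, hwc⟩)).lt_of_ne h
    simpa using (tendsto_rpow_atTop_of_base_lt_one _
      (by linarith [div_pos (hE c hc) hc₀pos]) ((div_lt_one hc₀pos).2 hlt)).const_mul (w c)
  have hscale : ∀ t : ℝ, ∑ c ∈ E, w c * c ^ t = c₀ ^ t * ∑ c ∈ E, w c * (c / c₀) ^ t := by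
    intro t
    rw [Finset.mul_sum]
    refine Finset.sum_congr rfl fun c hc => ?_
    rw [Real.div_rpow (hE c hc).le hc₀pos.le]
    field_simp [(Real.rpow_pos_of_pos hc₀pos t).ne']
  rcases hc₀.2.lt_or_gt with hneg | hpos
  · refine Or.inr <| (hlim.eventually (eventually_lt_nhds hneg)).mono fun t ht => ?_
    rw [hscale]
    exact (mul_neg_of_pos_of_neg (Real.rpow_pos_of_pos hc₀pos t) ht).le
  · refine Or.inl <| (hlim.eventually (eventually_gt_nhds hpos)).mono fun t ht => ?_
    rw [hscale]
    exact (mul_pos (Real.rpow_pos_of_pos hc₀pos t) ht).le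

lemma powerSum_eventuallyLE_total {m m' : ℝ →₀ ℕ} (hm : ∀ c ∈ m.support, 0 < c)
    (hm' : ∀ c ∈ m'.support, 0 < c) :
    powerSum m ≤ᶠ[atTop] powerSum m' ∨ powerSum m' ≤ᶠ[atTop] powerSum m := by
  classical
  have hE : ∀ c ∈ m.support ∪ m'.support, 0 < c := fun c hc =>
    (Finset.mem_union.1 hc).elim (hm c) (hm' c)
  have hdiff : ∀ t, powerSum m' t - powerSum m t =
      ∑ c ∈ m.support ∪ m'.support, ((m' c : ℝ) - m c) * c ^ t := fun t => by
    rw [powerSum_eq_sum Finset.subset_union_right, powerSum_eq_sum Finset.subset_union_left,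
      ← Finset.sum_sub_distrib]
    simp only [sub_mul]
  refine (eventually_nonneg_or_nonpos_sum_mul_rpow _ hE fun c => (m' c : ℝ) - m c).imp ?_ ?_ <;>
    refine fun h => h.mono fun t ht => ?_ <;> linarith [hdiff t]

lemma Finset.exists_forall_eventuallyLE {ι α β : Type*} [Preorder β] {l : Filter α}
    (f : ι → α → β) {s : Finset ι} (hs : s.Nonempty)
    (htotal : ∀ i ∈ s, ∀ j ∈ s, f i ≤ᶠ[l] f j ∨ f j ≤ᶠ[l] f i) :
    ∃ i ∈ s, ∀ j ∈ s, f i ≤ᶠ[l] f j := by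
  obtain ⟨i, hi, hmin⟩ := s.exists_minimalFor (fun i => (f i : l.Germ β)) hs
  refine ⟨i, hi, fun j hj => (htotal i hi j hj).elim id fun h => ?_⟩
  exact Germ.coe_le.1 (hmin hj (Germ.coe_le.2 h))

lemma Finsupp.isPWO_setOf_support_subset {α : Type*} {C : Set α} (hC : C.Finite) :
    {m : α →₀ ℕ | ↑m.support ⊆ C}.IsPWO := by
  have : Finite C := hC
  refine ((Set.isPWO_of_wellQuasiOrderedLE univ).image_of_monotone
    (embDomain_mono (Function.Embedding.subtype (· ∈ C)))).mono fun m hm => ?_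
  exact ⟨_, trivial, embDomain_comapDomain (by simpa using hm)⟩

section Profiles

variable {ι : Type*} (v : ι → ℝ →₀ ℕ) {C : Set ℝ}

lemma exists_finset_forall_exists_le (hC : C.Finite) (hv : ∀ i, ↑(v i).support ⊆ C) :
    ∃ F : Finset ι, ∀ i, ∃ j ∈ F, v j ≤ v i := by
  classical
  have hpwo : (range v).IsPWO :=
    (Finsupp.isPWO_setOf_support_subset hC).mono (range_subset_iff.2 hv)
  have hmin : {m | Minimal (· ∈ range v) m}.Finite :=
    (setOfPred_minimal_antichain _).finite_of_partiallyWellOrderedOn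
      (hpwo.mono (setOfPred_minimal_subset _))
  obtain ⟨F, -, hF⟩ := Finset.subset_set_image_iff.1
    (hmin.coe_toFinset.trans_subset ((setOfPred_minimal_subset _).trans image_univ.superset))
  refine ⟨F, fun i => ?_⟩
  obtain ⟨m, hmi, hm⟩ := hpwo.exists_le_minimal (mem_range_self i)
  obtain ⟨j, hj, rfl⟩ := Finset.mem_image.1 (hF ▸ hmin.mem_toFinset.2 hm)
  exact ⟨j, hj, hmi⟩

variable {v}

lemma exists_eventually_forall_powerSum_le [Nonempty ι] (hC : C.Finite) (hCpos : C ⊆ Ioi 0)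
    (hv : ∀ i, ↑(v i).support ⊆ C) :
    ∃ i₀, ∀ᶠ t in atTop, ∀ i, powerSum (v i₀) t ≤ powerSum (v i) t := by
  have hpos : ∀ i, ∀ c ∈ (v i).support, 0 < c := fun i c hc => hCpos (hv i hc)
  obtain ⟨F, hF⟩ := exists_finset_forall_exists_le v hC hv
  obtain ⟨i₀, -, hi₀⟩ := F.exists_forall_eventuallyLE (fun i => powerSum (v i))
    (let ⟨j, hj, _⟩ := hF (Classical.arbitrary ι); ⟨j, hj⟩)
    fun i _ j _ => powerSum_eventuallyLE_total (hpos i) (hpos j)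
  refine ⟨i₀, ((Finset.eventually_all F).2 hi₀).mono fun t ht i => ?_⟩
  obtain ⟨j, hj, hji⟩ := hF i
  exact (ht j hj).trans (powerSum_mono hji (fun c hc => (hpos i c hc).le) t)

lemma nonempty_of_isGLB_range {β : Type*} [Preorder β] [NoMaxOrder β] {f : ι → β} {x : β}
    (h : IsGLB (range f) x) : Nonempty ι := by
  by_contra hι
  rw [range_eq_empty_iff.2 (not_nonempty_iff.1 hι), isGLB_empty_iff] at h
  exact not_isTop x h

variable {a : ℝ} {μ : ℝ → ℝ}

lemma exists_forall_gt_eq_powerSum_rpow (hC : C.Finite) (hCpos : C ⊆ Ioi 0)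
    (hv : ∀ i, ↑(v i).support ⊆ C) (ha : 0 ≤ a)
    (hμ : ∀ t > a, IsGLB (range fun i => powerSum (v i) t ^ (1 / t)) (μ t)) :
    ∃ s, a ≤ s ∧ ∃ i, ∀ t > s, μ t = powerSum (v i) t ^ (1 / t) := by
  have : Nonempty ι := nonempty_of_isGLB_range (hμ (a + 1) (by linarith))
  obtain ⟨i₀, hi₀⟩ := exists_eventually_forall_powerSum_le hC hCpos hv
  obtain ⟨s, hs⟩ := eventually_atTop.1 hi₀
  refine ⟨max a s, le_max_left _ _, i₀, fun t ht => ?_⟩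
  have hat : a < t := (le_max_left _ _).trans_lt ht
  have hst : s ≤ t := ((le_max_right _ _).trans_lt ht).le
  have ht₀ : 0 < t := by linarith
  refine (hμ t hat).unique (IsLeast.isGLB ⟨mem_range_self i₀, forall_mem_range.2 fun i => ?_⟩)
  exact Real.rpow_le_rpow (powerSum_nonneg (fun c hc => (hCpos (hv i₀ hc)).le) t) (hs t hst i)
    (by positivity)

lemma exists_finset_isLeast_powerSum_rpow (hC : C.Finite) (hC₀ : C ⊆ Ici 0)
    (hv : ∀ i, ↑(v i).support ⊆ C) (ha : 0 ≤ a)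
    (hμ : ∀ t > a, IsGLB (range fun i => powerSum (v i) t ^ (1 / t)) (μ t)) :
    ∃ F : Finset ι, ∀ t > a, IsLeast ((fun i => powerSum (v i) t ^ (1 / t)) '' F) (μ t) := by
  obtain ⟨F, hF⟩ := exists_finset_forall_exists_le v hC hv
  refine ⟨F, fun t ht => ?_⟩
  have : Nonempty ι := nonempty_of_isGLB_range (hμ t ht)
  obtain ⟨j₀, hj₀, hmin⟩ := F.exists_min_image (fun i => powerSum (v i) t ^ (1 / t))
    (let ⟨j, hj, _⟩ := hF (Classical.arbitrary ι); ⟨j, hj⟩)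
  have hleast : IsLeast (range fun i => powerSum (v i) t ^ (1 / t))
      (powerSum (v j₀) t ^ (1 / t)) := by
    refine ⟨mem_range_self j₀, forall_mem_range.2 fun i => ?_⟩
    obtain ⟨j, hj, hji⟩ := hF i
    have ht₀ : 0 < t := by linarith
    exact (hmin j hj).trans <| Real.rpow_le_rpow (powerSum_nonneg (fun c hc => hC₀ (hv j hc)) t)
      (powerSum_mono hji (fun c hc => hC₀ (hv i hc)) t) (by positivity)
  rw [(hμ t ht).unique hleast.isGLB]
  exact ⟨mem_image_of_mem _ hj₀, forall_mem_image.2 hmin⟩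

end Profiles

section FiniteFamilies

variable {ι : Type*} [Fintype ι]

/-- Zero values are dropped so that the power sums built from it have positive bases only. -/
noncomputable def nonzeroMultiplicities (x : ι → ℝ) : ℝ →₀ ℕ :=
  ∑ i with x i ≠ 0, Finsupp.single (x i) 1

lemma support_nonzeroMultiplicities_subset (x : ι → ℝ) :
    ↑(nonzeroMultiplicities x).support ⊆ range x \ {0} := by
  classical
  intro c hc
  obtain ⟨i, hi, hc⟩ := Finset.mem_biUnion.1 (Finsupp.support_finsetSum hc)
  rw [Finset.mem_singleton.1 (Finsupp.support_single_subset hc)]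
  exact ⟨mem_range_self i, (Finset.mem_filter.1 hi).2⟩

lemma powerSum_nonzeroMultiplicities (x : ι → ℝ) {t : ℝ} (ht : t ≠ 0) :
    powerSum (nonzeroMultiplicities x) t = ∑ i, x i ^ t := by
  rw [powerSum, nonzeroMultiplicities, ← Finsupp.sum_finsetSum_index (by simp)
    (fun _ _ _ => by push_cast; ring)]
  simp only [Finsupp.sum_single_index, Nat.cast_zero, zero_mul, Nat.cast_one, one_mul]
  exact Finset.sum_filter_of_ne fun i _ h hxi => h (by rw [hxi, Real.zero_rpow ht])

end FiniteFamilies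

noncomputable def seqOfFin {n : ℕ} (x : Fin n → ℝ) : ℕ →₀ ℝ :=
  (Finsupp.equivFunOnFinite.symm x).embDomain Fin.valEmbedding

lemma ltNorm_seqOfFin {n : ℕ} {x : Fin n → ℝ} (hx : ∀ i, 0 ≤ x i) {t : ℝ} (ht : t ≠ 0) :
    ltNorm (seqOfFin x) t = (∑ i, x i ^ t) ^ (1 / t) := by
  change (Finsupp.sum _ fun _ y => |y| ^ t) ^ (1 / t) = _
  rw [seqOfFin, Finsupp.sum_embDomain,
    Finsupp.sum_fintype _ _ fun _ => by simp [Real.zero_rpow ht]]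
  simp [abs_of_nonneg (hx _)]

def FactorizationIn {G : Type*} [CommGroup G] (S : Set G) (α : G) : Type _ :=
  {p : Σ N : ℕ, Fin (N + 1) → G // (∀ i, p.2 i ∈ S) ∧ α = ∏ i, p.2 i}

lemma Replaces.isGLB_range {G : Type*} [CommGroup G] {φ : G → ℝ} {t : ℝ} {α : G} {S : Set G}
    (h : Replaces φ t α S) :
    IsGLB (range fun p : FactorizationIn S α => (∑ i, φ (p.1.2 i) ^ t) ^ (1 / t))
      (metricVersion φ t α) := by
  unfold Replaces at h
  convert h using 2
  ext x
  constructor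
  · rintro ⟨⟨⟨N, f⟩, hS, hα⟩, rfl⟩
    exact ⟨N, f, hS, hα, rfl⟩
  · rintro ⟨N, f, hS, hα, rfl⟩
    exact ⟨⟨⟨N, f⟩, hS, hα⟩, rfl⟩

theorem eventually_single_factorization_general {G : Type*} [CommGroup G]
    (φ : G → ℝ) (hφ : IsHeight φ) (α : G) (a : ℝ) (ha : 0 ≤ a)
    (S : Set G) (hSfin : (φ '' S).Finite)
    (hrep : ∀ t ∈ Set.Ioi a, Replaces φ t α S) :
    (∃ s : ℝ, a ≤ s ∧ ∃ (N : ℕ) (f : Fin (N + 1) → G), (∀ i, f i ∈ S) ∧ α = ∏ i, f i ∧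
      ∀ t ∈ Set.Ioi s, metricVersion φ t α = (∑ i, φ (f i) ^ t) ^ (1 / t)) ∧
    (∃ (M : ℕ →₀ ℝ) (s : ℝ), a ≤ s ∧
      ∀ t ∈ Set.Ioi s, metricVersion φ t α = ltNorm M t) ∧
    ∃ 𝒳 : Set (ℕ →₀ ℝ), 𝒳.Finite ∧
      ∀ t ∈ Set.Ioi a, IsLeast ((fun x => ltNorm x t) '' 𝒳) (metricVersion φ t α) := by
  obtain ⟨hφ₀, -, -⟩ := hφ
  set v : FactorizationIn S α → ℝ →₀ ℕ := fun p => nonzeroMultiplicities (φ ∘ p.1.2)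
  have hv : ∀ p, ↑(v p).support ⊆ φ '' S ∩ Ioi 0 := by
    intro p c hc
    obtain ⟨⟨i, rfl⟩, hc₀⟩ := support_nonzeroMultiplicities_subset _ hc
    exact ⟨mem_image_of_mem φ (p.2.1 i), (hφ₀ _).lt_of_ne' hc₀⟩
  have hpow : ∀ p : FactorizationIn S α, ∀ t > a,
      powerSum (v p) t ^ (1 / t) = (∑ i, φ (p.1.2 i) ^ t) ^ (1 / t) := fun p t ht => by
    rw [powerSum_nonzeroMultiplicities _ (by linarith)]; rfl
  have hnorm : ∀ p : FactorizationIn S α, ∀ t > a,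
      ltNorm (seqOfFin (φ ∘ p.1.2)) t = powerSum (v p) t ^ (1 / t) := fun p t ht =>
    (ltNorm_seqOfFin (fun _ => hφ₀ _) (by linarith)).trans (hpow p t ht).symm
  have hμ : ∀ t > a, IsGLB (range fun p => powerSum (v p) t ^ (1 / t)) (metricVersion φ t α) :=
    fun t ht => by simpa only [hpow _ t ht] using (hrep t ht).isGLB_range
  have hC := hSfin.inter_of_left (Ioi 0)
  obtain ⟨s, has, ⟨⟨N, f⟩, hfS, hα⟩, hs⟩ :=
    exists_forall_gt_eq_powerSum_rpow hC inter_subset_right hv ha hμ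
  obtain ⟨F, hF⟩ := exists_finset_isLeast_powerSum_rpow hC
    (inter_subset_right.trans Ioi_subset_Ici_self) hv ha hμ
  refine ⟨⟨s, has, N, f, hfS, hα, fun t ht => ?_⟩, ⟨seqOfFin (φ ∘ f), s, has, fun t ht => ?_⟩,
    ⟨(fun p : FactorizationIn S α => seqOfFin (φ ∘ p.1.2)) '' F, F.finite_toSet.image _,
      fun t ht => ?_⟩⟩
  · exact (hs t ht).trans (hpow _ t (has.trans_lt ht))
  · exact (hs t ht).trans (hnorm _ t (has.trans_lt ht)).symm
  · rw [image_image, image_congr fun p _ => hnorm p t ht]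
    exact hF t ht

/-- Let `φ` be a height on `G`, `α ∈ G`, `a ≥ 0`, and suppose there is a set `S ⊆ G`
containing the identity, with `φ(S)` finite, that replaces `G` at every `t ∈ (a,∞)`.
Then there are `s ≥ a` and a single factorization `α = ∏ₙ αₙ` with all `αₙ ∈ S` such that
`φ_t(α) = (∑ₙ φ(αₙ)^t)^(1/t)` for all `t ∈ (s,∞)`; in particular there is a single
finitely supported real sequence `M` with `φ_t(α) = ‖M‖_t` for all sufficiently large `t`,
and there is a finite set `𝒳` of finitely supported real sequences with
`φ_t(α) = min{‖x‖_t : x ∈ 𝒳}` for all `t ∈ (a,∞)`. -/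
theorem eventually_single_factorization {G : Type*} [CommGroup G]
    (φ : G → ℝ) (hφ : IsHeight φ) (α : G) (a : ℝ) (ha : 0 ≤ a)
    (S : Set G) (hS1 : (1 : G) ∈ S) (hSfin : (φ '' S).Finite)
    (hrep : ∀ t ∈ Set.Ioi a, Replaces φ t α S) :
    (∃ s : ℝ, a ≤ s ∧ ∃ (N : ℕ) (f : Fin (N + 1) → G), (∀ i, f i ∈ S) ∧ α = ∏ i, f i ∧
      ∀ t ∈ Set.Ioi s, metricVersion φ t α = (∑ i, φ (f i) ^ t) ^ (1 / t)) ∧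
    (∃ (M : ℕ →₀ ℝ) (s : ℝ), a ≤ s ∧
      ∀ t ∈ Set.Ioi s, metricVersion φ t α = ltNorm M t) ∧
    ∃ 𝒳 : Set (ℕ →₀ ℝ), 𝒳.Finite ∧
      ∀ t ∈ Set.Ioi a, IsLeast ((fun x => ltNorm x t) '' 𝒳) (metricVersion φ t α) :=
  eventually_single_factorization_general φ hφ α a ha S hSfin hrep
end
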